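/- arXiv:2511.23095 — 2 statements merged into one kernel-verified Lean document; each statement's English description precedes it below -/
import Mathlib

section
/- Each vector R_i (i = 1, 2, 3, 4) is a right eigenvector of the matrix A with eigenvalue λ_i: A R₁ = λ₁ R₁, A R₂ = u R₂, A R₃ = u R₃, and A R₄ = λ₄ R₄. -/
/-! The mixture relation gives `(ρ₁ - ρ₂) ψ / ρ = 1 - ρ₂ / ρ`, which turns every row of `A R = λ R`
into an identity, except the second row for `R₁` and `R₄`: there it becomes the quadratic
`(λ - u_ρ)² = a_s²`, whose roots are `λ₁` and `λ₄`. -/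

noncomputable def coeffMatrix (ρ β σ κ ψ u v ρ₁ ρ₂ : ℝ) : Matrix (Fin 4) (Fin 4) ℝ :=
  !![u, 1, 0, -(ρ₁ - ρ₂) * u;
     β, 2 * u, 0, -(ρ₁ - ρ₂) * u ^ 2 - σ * κ;
     0, v, u, -(ρ₁ - ρ₂) * u * v;
     0, ψ / ρ, 0, ρ₂ * u / ρ]

open Matrix

section

variable {ρ β σ κ ψ u v ρ₁ ρ₂ : ℝ}

theorem coeffMatrix_mulVec_acoustic {lam : ℝ} (hρ : ρ ≠ 0) (hmix : ρ - ρ₂ = (ρ₁ - ρ₂) * ψ)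
    (hchar : (lam - (1 + ρ₂ / (2 * ρ)) * u) ^ 2
      = ((1 + ρ₂ / (2 * ρ)) * u - u) ^ 2 + β - σ * κ * ψ / ρ) :
    coeffMatrix ρ β σ κ ψ u v ρ₁ ρ₂ *ᵥ ![1, lam - ρ₂ * u / ρ, v, ψ / ρ]
      = lam • ![1, lam - ρ₂ * u / ρ, v, ψ / ρ] := by
  have hψ : (ρ₁ - ρ₂) * ψ / ρ = 1 - ρ₂ / ρ := by rw [← hmix, sub_div, div_self hρ]
  ext i; fin_cases i <;>
    simp only [coeffMatrix, mulVec, dotProduct, Fin.sum_univ_four, of_apply, cons_val', cons_val,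
      cons_val_zero, cons_val_one, cons_val_fin_one, Fin.zero_eta, Fin.mk_one, Fin.reduceFinMk,
      Pi.smul_apply, smul_eq_mul]
  · linear_combination (-u) * hψ
  · linear_combination -hchar - u ^ 2 * hψ
  · linear_combination (-u * v) * hψ
  · ring

theorem coeffMatrix_mulVec_contact (hρ : ρ ≠ 0) (hβ : β ≠ 0) (hmix : ρ - ρ₂ = (ρ₁ - ρ₂) * ψ) :
    coeffMatrix ρ β σ κ ψ u v ρ₁ ρ₂ *ᵥ ![σ * κ / β, (ρ₁ - ρ₂) * u, 0, 1]
      = u • ![σ * κ / β, (ρ₁ - ρ₂) * u, 0, 1] := by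
  have hψ : (ρ₁ - ρ₂) * ψ / ρ = 1 - ρ₂ / ρ := by rw [← hmix, sub_div, div_self hρ]
  ext i; fin_cases i <;>
    simp only [coeffMatrix, mulVec, dotProduct, Fin.sum_univ_four, of_apply, cons_val', cons_val,
      cons_val_zero, cons_val_one, cons_val_fin_one, Fin.zero_eta, Fin.mk_one, Fin.reduceFinMk,
      Pi.smul_apply, smul_eq_mul]
  · ring
  · linear_combination σ * κ * mul_inv_cancel₀ hβ
  · ring
  · linear_combination u * hψ

theorem coeffMatrix_mulVec_single_two :
    coeffMatrix ρ β σ κ ψ u v ρ₁ ρ₂ *ᵥ ![0, 0, 1, 0] = u • ![0, 0, 1, 0] := by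
  ext i; fin_cases i <;> simp [coeffMatrix, mulVec, dotProduct, Fin.sum_univ_four]

end

/-- Each vector `R_i` is a right eigenvector of the coefficient matrix `A` with
eigenvalue `λ_i`. -/
theorem right_eigenvectors_of_A
    (ρ β σ κ ψ u v ρ₁ ρ₂ : ℝ) (hρ : 0 < ρ) (hβ : 0 < β)
    (hmix : ρ - ρ₂ = (ρ₁ - ρ₂) * ψ)
    (uρ as lam1 lam4 : ℝ) (huρ : uρ = (1 + ρ₂ / (2 * ρ)) * u)
    (hnn : 0 ≤ (uρ - u) ^ 2 + β - σ * κ * ψ / ρ)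
    (has : as = Real.sqrt ((uρ - u) ^ 2 + β - σ * κ * ψ / ρ))
    (hlam1 : lam1 = uρ - as) (hlam4 : lam4 = uρ + as) :
    (!![u, 1, 0, -(ρ₁ - ρ₂) * u;
        β, 2 * u, 0, -(ρ₁ - ρ₂) * u ^ 2 - σ * κ;
        0, v, u, -(ρ₁ - ρ₂) * u * v;
        0, ψ / ρ, 0, ρ₂ * u / ρ]).mulVec ![1, lam1 - ρ₂ * u / ρ, v, ψ / ρ]
      = lam1 • ![1, lam1 - ρ₂ * u / ρ, v, ψ / ρ] ∧
    (!![u, 1, 0, -(ρ₁ - ρ₂) * u;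
        β, 2 * u, 0, -(ρ₁ - ρ₂) * u ^ 2 - σ * κ;
        0, v, u, -(ρ₁ - ρ₂) * u * v;
        0, ψ / ρ, 0, ρ₂ * u / ρ]).mulVec ![σ * κ / β, (ρ₁ - ρ₂) * u, 0, 1]
      = u • ![σ * κ / β, (ρ₁ - ρ₂) * u, 0, 1] ∧
    (!![u, 1, 0, -(ρ₁ - ρ₂) * u;
        β, 2 * u, 0, -(ρ₁ - ρ₂) * u ^ 2 - σ * κ;
        0, v, u, -(ρ₁ - ρ₂) * u * v;
        0, ψ / ρ, 0, ρ₂ * u / ρ]).mulVec ![0, 0, 1, 0]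
      = u • (![0, 0, 1, 0] : Fin 4 → ℝ) ∧
    (!![u, 1, 0, -(ρ₁ - ρ₂) * u;
        β, 2 * u, 0, -(ρ₁ - ρ₂) * u ^ 2 - σ * κ;
        0, v, u, -(ρ₁ - ρ₂) * u * v;
        0, ψ / ρ, 0, ρ₂ * u / ρ]).mulVec ![1, lam4 - ρ₂ * u / ρ, v, ψ / ρ]
      = lam4 • ![1, lam4 - ρ₂ * u / ρ, v, ψ / ρ] := by
  have hsq : as ^ 2 = (uρ - u) ^ 2 + β - σ * κ * ψ / ρ := has ▸ Real.sq_sqrt hnn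
  subst huρ
  exact ⟨coeffMatrix_mulVec_acoustic hρ.ne' hmix (by rw [hlam1]; linear_combination hsq),
    coeffMatrix_mulVec_contact hρ.ne' hβ.ne' hmix,
    coeffMatrix_mulVec_single_two,
    coeffMatrix_mulVec_acoustic hρ.ne' hmix (by rw [hlam4]; linear_combination hsq)⟩
end

section
/- The rotational invariance identity holds: for any unit vector n = (n_x, n_y), F_c(U) n_x + G_c(U) n_y + B_x(U,κ) U n_x + B_y(U,κ) U n_y = T⁻¹ (F_c(TU) + B_x(TU,κ) (TU)), where T is the rotation matrix diag-block rotating the momentum components. -/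
/-!
The mass and volume-fraction fluxes and the first row of the non-conservative product depend
on the velocity only through the normal velocity `û = u n_x + v n_y`. The pressure and the
surface-tension term `-σκψ` enter only the normal momentum row, so `T⁻¹` turns them into
`(p - σκψ) (n_x, n_y)`. What remains is the convective momentum flux `ρ û (û, v̂)`, which `T⁻¹`
rotates back to `ρ û (u, v)` since `T` is orthogonal.
-/

section
variable {R : Type*} [CommRing R] {nx ny : R}

theorem unrotate_rotate_fst (hn : nx ^ 2 + ny ^ 2 = 1) (u v : R) :
    nx * (u * nx + v * ny) - ny * (-u * ny + v * nx) = u := by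
  linear_combination u * hn

theorem unrotate_rotate_snd (hn : nx ^ 2 + ny ^ 2 = 1) (u v : R) :
    ny * (u * nx + v * ny) + nx * (-u * ny + v * nx) = v := by
  linear_combination v * hn

end

theorem rotational_invariance_general
    (β σ κ ρ₁ ρ₂ p u v ψ ρ nx ny uh vh : ℝ)
    (hn : nx ^ 2 + ny ^ 2 = 1)
    (hu : uh = u * nx + v * ny) (hv : vh = -u * ny + v * nx) :
    nx • (![ρ * u, ρ * u ^ 2 + p, ρ * u * v, u * ψ] : Fin 4 → ℝ)
      + ny • (![ρ * v, ρ * u * v, ρ * v ^ 2 + p, v * ψ] : Fin 4 → ℝ)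
      + nx • ((!![u, 0, 0, -(ρ₁ - ρ₂) * u;
                  0, 0, 0, -σ * κ;
                  0, 0, 0, 0;
                  0, 0, 0, 0]).mulVec ![p / β, ρ * u, ρ * v, ψ])
      + ny • ((!![v, 0, 0, -(ρ₁ - ρ₂) * v;
                  0, 0, 0, 0;
                  0, 0, 0, -σ * κ;
                  0, 0, 0, 0]).mulVec ![p / β, ρ * u, ρ * v, ψ])
    = (!![1, 0, 0, 0;
          0, nx, -ny, 0;
          0, ny, nx, 0;
          0, 0, 0, 1]).mulVec
        ((![ρ * uh, ρ * uh ^ 2 + p, ρ * uh * vh, uh * ψ] : Fin 4 → ℝ)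
          + (!![uh, 0, 0, -(ρ₁ - ρ₂) * uh;
                0, 0, 0, -σ * κ;
                0, 0, 0, 0;
                0, 0, 0, 0]).mulVec ![p / β, ρ * uh, ρ * vh, ψ]) := by
  subst hu hv
  ext i
  fin_cases i <;>
    simp [Matrix.mulVec, dotProduct, Fin.sum_univ_four, Matrix.vecHead, Matrix.vecTail]
  · ring
  · linear_combination (-ρ * (u * nx + v * ny)) * unrotate_rotate_fst hn u v
  · linear_combination (-ρ * (u * nx + v * ny)) * unrotate_rotate_snd hn u v
  · ring

/-- Rotational invariance of the conservative fluxes and non-conservative products of the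
weakly compressible two-phase model. -/
theorem rotational_invariance
    (β σ κ ρ₁ ρ₂ p u v ψ ρ nx ny uh vh : ℝ)
    (hρ : ρ = ρ₁ * ψ + ρ₂ * (1 - ψ)) (hρ0 : 0 < ρ) (hβ : β ≠ 0)
    (hn : nx ^ 2 + ny ^ 2 = 1)
    (hu : uh = u * nx + v * ny) (hv : vh = -u * ny + v * nx) :
    nx • (![ρ * u, ρ * u ^ 2 + p, ρ * u * v, u * ψ] : Fin 4 → ℝ)
      + ny • (![ρ * v, ρ * u * v, ρ * v ^ 2 + p, v * ψ] : Fin 4 → ℝ)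
      + nx • ((!![u, 0, 0, -(ρ₁ - ρ₂) * u;
                  0, 0, 0, -σ * κ;
                  0, 0, 0, 0;
                  0, 0, 0, 0]).mulVec ![p / β, ρ * u, ρ * v, ψ])
      + ny • ((!![v, 0, 0, -(ρ₁ - ρ₂) * v;
                  0, 0, 0, 0;
                  0, 0, 0, -σ * κ;
                  0, 0, 0, 0]).mulVec ![p / β, ρ * u, ρ * v, ψ])
    = (!![1, 0, 0, 0;
          0, nx, -ny, 0;
          0, ny, nx, 0;
          0, 0, 0, 1]).mulVec
        ((![ρ * uh, ρ * uh ^ 2 + p, ρ * uh * vh, uh * ψ] : Fin 4 → ℝ)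
          + (!![uh, 0, 0, -(ρ₁ - ρ₂) * uh;
                0, 0, 0, -σ * κ;
                0, 0, 0, 0;
                0, 0, 0, 0]).mulVec ![p / β, ρ * uh, ρ * vh, ψ]) :=
  rotational_invariance_general β σ κ ρ₁ ρ₂ p u v ψ ρ nx ny uh vh hn hu hv
end
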